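/- Assume p^n·v_K(f) ≥ b·p^{r+1}, and set 𝔗 = p^n·v_K(f) - b·(p^{r+1} - 1) (so 𝔗 ≥ b > 0). Then for every s with 0 ≤ s ≤ n-1 and every i with 1 ≤ i ≤ p^n - 1, writing i = Σ_{s=0}^{n-1} i_s p^s in base p, one has z_{p^s}(x^i) - i_s·x^{i - p^s} ∈ x^{i - p^s}·𝔓_L^𝔗, i.e. z_{p^s}(x^i) ≡ i_s·x^{i-p^s} modulo x^{i-p^s}·𝔓_L^𝔗 (powers of x computed in L, in which x is invertible). -/

import Mathlib

open Polynomial TensorProduct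

noncomputable section

/-- The truncated polynomial algebra `K[t]/(t^{p^n})`, underlying the Hopf algebra
`H_{n,r,f}`. -/
abbrev TruncAlg (K : Type) [Field K] (p n : ℕ) : Type :=
  AdjoinRoot (X ^ p ^ n : K[X])

/-- `t`, the image of `X` in `K[t]/(t^{p^n})`. -/
def tgen (K : Type) [Field K] (p n : ℕ) : TruncAlg K p n :=
  AdjoinRoot.root _

/-- The basis `1, t, t^2, …, t^{p^n-1}` of `K[t]/(t^{p^n})`. -/
def tbasis (K : Type) [Field K] (p n : ℕ) :
    Module.Basis (Fin (p ^ n)) K (TruncAlg K p n) :=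
  (AdjoinRoot.powerBasis (f := (X ^ p ^ n : K[X]))
    (pow_ne_zero _ Polynomial.X_ne_zero)).basis.reindex
    (finCongr (by simp))

/-- The dual basis functional `z_j ∈ H = H_{n,r,f}^*`, with `z_j (t^i) = δ_{ij}`;
junk value `0` out of range. -/
def zdual (K : Type) [Field K] (p n : ℕ) (j : ℕ) :
    Module.Dual K (TruncAlg K p n) :=
  if h : j < p ^ n then (tbasis K p n).coord ⟨j, h⟩ else 0

/-- The coefficient `1/(ℓ!(p-ℓ)!)`, computed in the prime field of `K`. -/
def pfCoeff (K : Type) [Field K] (p ℓ : ℕ) : K :=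
  ((ℓ.factorial * (p - ℓ).factorial : ℕ) : K)⁻¹

/-- The element `Δ(t) = t⊗1 + 1⊗t + f Σ_{ℓ=1}^{p-1} (1/(ℓ!(p-ℓ)!)) t^{p^r ℓ} ⊗ t^{p^r (p-ℓ)}`. -/
def Delta_t (K : Type) [Field K] (p n r : ℕ) (f : K) :
    TruncAlg K p n ⊗[K] TruncAlg K p n :=
  tgen K p n ⊗ₜ 1 + 1 ⊗ₜ tgen K p n +
    f • ∑ ℓ ∈ Finset.Icc 1 (p - 1),
      pfCoeff K p ℓ • ((tgen K p n ^ (p ^ r * ℓ)) ⊗ₜ[K] (tgen K p n ^ (p ^ r * (p - ℓ))))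

/-- The comultiplication of `H_{n,r,f}` as a linear map, determined by `Δ(t^i) = Δ(t)^i`
(it is the unique `K`-algebra map with `t ↦ Δ(t)`). -/
def DeltaMap (K : Type) [Field K] (p n r : ℕ) (f : K) :
    TruncAlg K p n →ₗ[K] TruncAlg K p n ⊗[K] TruncAlg K p n :=
  (tbasis K p n).constr K fun i => (Delta_t K p n r f) ^ (i : ℕ)

/-- Convolution product on `H = (H_{n,r,f})^*`:  `(z * z')(h) = mult ((z ⊗ z')(Δ h))`. -/
def conv (K : Type) [Field K] (p n r : ℕ) (f : K)
    (z z' : Module.Dual K (TruncAlg K p n)) : Module.Dual K (TruncAlg K p n) :=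
  (LinearMap.mul' K K) ∘ₗ (TensorProduct.map z z') ∘ₗ DeltaMap K p n r f

/-- Convolution powers; the 0th power is the unit `z_0 = ε` of `H`. -/
def convPow (K : Type) [Field K] (p n r : ℕ) (f : K)
    (z : Module.Dual K (TruncAlg K p n)) : ℕ → Module.Dual K (TruncAlg K p n)
  | 0 => zdual K p n 0
  | m + 1 => conv K p n r f (convPow K p n r f z m) z

/-- The convolution product `z_1^{j 0} · z_p^{j 1} ⋯ z_{p^{m-1}}^{j (m-1)}` in `H`. -/
def zprod (K : Type) [Field K] (p n r : ℕ) (f : K)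
    (j : ℕ → ℕ) : ℕ → Module.Dual K (TruncAlg K p n)
  | 0 => zdual K p n 0
  | m + 1 => conv K p n r f (zprod K p n r f j m)
      (convPow K p n r f (zdual K p n (p ^ m)) (j m))

/-- The element `α(x) = x⊗1 + 1⊗t + f Σ_{ℓ=1}^{p-1} (1/(ℓ!(p-ℓ)!)) x^{p^r ℓ} ⊗ t^{p^r(p-ℓ)}`
of `L ⊗ H_{n,r,f}`. -/
def alphaEl (K : Type) [Field K] (p n r : ℕ) (f : K)
    (L : Type) [Field L] [Algebra K L] (x : L) : L ⊗[K] TruncAlg K p n :=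
  x ⊗ₜ 1 + 1 ⊗ₜ tgen K p n +
    f • ∑ ℓ ∈ Finset.Icc 1 (p - 1),
      pfCoeff K p ℓ • ((x ^ (p ^ r * ℓ)) ⊗ₜ[K] (tgen K p n ^ (p ^ r * (p - ℓ))))

/-- The coaction `α : L → L ⊗ H_{n,r,f}` as a linear map, determined by `α(x^i) = α(x)^i`
(it is the unique `K`-algebra map with `x ↦ α(x)`). -/
def alphaMap (K : Type) [Field K] (p n r : ℕ) (f : K)
    (L : Type) [Field L] [Algebra K L] (x : L) (bL : Module.Basis (Fin (p ^ n)) K L) :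
    L →ₗ[K] L ⊗[K] TruncAlg K p n :=
  bL.constr K fun i => (alphaEl K p n r f L x) ^ (i : ℕ)

/-- The action of `h ∈ H = H_{n,r,f}^*` on `L`:  `h(y) = (mult ∘ (1 ⊗ h))(α(y))`. -/
def hact (K : Type) [Field K] (p n r : ℕ) (f : K)
    (L : Type) [Field L] [Algebra K L] (x : L) (bL : Module.Basis (Fin (p ^ n)) K L)
    (h : Module.Dual K (TruncAlg K p n)) : L →ₗ[K] L :=
  (TensorProduct.rid K L).toLinearMap ∘ₗ (TensorProduct.map LinearMap.id h) ∘ₗ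
    alphaMap K p n r f L x bL

/-- The fractional ideal `𝔓_L^h = {y ∈ L : v_L(y) ≥ h}`. -/
def fracIdeal (L : Type) [Zero L] (vL : L → ℤ) (h : ℤ) : Set L :=
  {y | y ≠ 0 → h ≤ vL y}

/-- The `s`-th base-`p` digit of a natural number. -/
def digit (p i s : ℕ) : ℕ := i / p ^ s % p

/-- `res(m)`: the least nonnegative residue of `m` modulo `N`. -/
def resZ (N : ℕ) (m : ℤ) : ℤ := m % (N : ℤ)

/-- The `s`-th base-`p` digit of an integer (intended: of a least nonnegative residue). -/
def digitZ (p : ℕ) (m : ℤ) (s : ℕ) : ℤ := m / (p : ℤ) ^ s % (p : ℤ)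

/-- The uniformizer `T` of `K = F_q((T))`. -/
def Tvar (F : Type) [Field F] : LaurentSeries F := HahnSeries.single (1 : ℤ) (1 : F)

/-- The scaffold element `λ_j = T^{(j + b·res(aj))/p^n} x^{res(aj)}`. -/
def lam (F : Type) [Field F] (p n : ℕ) (a b : ℤ)
    (L : Type) [Field L] [Algebra (LaurentSeries F) L] (x : L) (j : ℤ) : L :=
  algebraMap (LaurentSeries F) L
      (Tvar F ^ ((j + b * resZ (p ^ n) (a * j)) / ((p : ℤ) ^ n))) *
    x ^ (resZ (p ^ n) (a * j)).toNat


/-!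
Give `t` weight `b` and say that `z ∈ L ⊗ K[t]/(t^{p^n})` has level `c` when its
`t^j`-coefficient has valuation at least `c + b j`. Levels are additive subgroups and multiply
additively. Writing `α(x) = P + C` with `P = x ⊗ 1 + 1 ⊗ t`, the element `P` has level `-b`
and, because of the bound on `v_K(f)`, `C` has level `-b + 𝔗`; hence `α(x)^i - P^i` has level
`-b i + 𝔗`.
Now `z_{p^s}(x^i)` is the `t^{p^s}`-coefficient of `α(x)^i`, the `t^{p^s}`-coefficient of `P^i` is
`binom(i, p^s) x^{i-p^s} ≡ i_s x^{i-p^s}` by Lucas' theorem, and the level bound at `j = p^s` is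
exactly `v_L(x^{i-p^s}) + 𝔗`.
-/

section IntValuation

variable {R : Type} [Ring R]

theorem AddValuation.eq_coe_of_map_pow (v : AddValuation R (WithTop ℤ)) {x : R} {N : ℕ}
    (hN : N ≠ 0) {a : ℤ} (h : v (x ^ N) = ↑(N * a)) : v x = a := by
  rw [v.map_pow] at h
  induction hv : v x using WithTop.recTopCoe with
  | top =>
    obtain ⟨k, rfl⟩ := Nat.exists_eq_succ_of_ne_zero hN
    rw [hv, succ_nsmul, WithTop.add_top] at h
    exact absurd h WithTop.top_ne_coe
  | coe c =>
    rw [hv, ← WithTop.coe_nsmul, WithTop.coe_inj, nsmul_eq_mul] at h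
    rw [WithTop.coe_inj]
    exact mul_left_cancel₀ (Nat.cast_ne_zero.mpr hN) h

theorem AddValuation.map_zpow_of_eq_coe {K : Type} [Field K] (v : AddValuation K (WithTop ℤ))
    {x : K} {a : ℤ} (hx : v x = a) (m : ℤ) : v (x ^ m) = ↑(m * a) := by
  cases m with
  | ofNat m => rw [Int.ofNat_eq_natCast, zpow_natCast, v.map_pow, hx, ← WithTop.coe_nsmul,
      nsmul_eq_mul]
  | negSucc m =>
    rw [zpow_negSucc, v.map_inv, v.map_pow, hx, ← WithTop.coe_nsmul,
      ← WithTop.LinearOrderedAddCommGroup.coe_neg, WithTop.coe_inj, nsmul_eq_mul, Int.negSucc_eq]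
    push_cast
    ring

variable [IsDomain R] (vL : R → ℤ)
  (hmul : ∀ y z : R, y ≠ 0 → z ≠ 0 → vL (y * z) = vL y + vL z)
  (hadd : ∀ y z : R, y ≠ 0 → z ≠ 0 → y + z ≠ 0 → min (vL y) (vL z) ≤ vL (y + z))

open Classical in
def addValuationOfNeZero : AddValuation R (WithTop ℤ) :=
  AddValuation.of (fun y => if y = 0 then ⊤ else (vL y : WithTop ℤ))
    (if_pos rfl)
    (by
      have h := hmul 1 1 one_ne_zero one_ne_zero
      rw [mul_one, left_eq_add] at h
      simp [h])
    (fun y z => by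
      by_cases hy : y = 0; · simp [hy]
      by_cases hz : z = 0; · simp [hz]
      by_cases hyz : y + z = 0; · simp [hyz]
      simp only [if_neg hy, if_neg hz, if_neg hyz, ← WithTop.coe_min, WithTop.coe_le_coe]
      exact hadd y z hy hz hyz)
    (fun y z => by
      by_cases hy : y = 0; · simp [hy]
      by_cases hz : z = 0; · simp [hz]
      simp only [if_neg hy, if_neg hz, if_neg (mul_ne_zero hy hz), hmul y z hy hz,
        WithTop.coe_add])

theorem addValuationOfNeZero_apply {y : R} (hy : y ≠ 0) :
    addValuationOfNeZero vL hmul hadd y = vL y :=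
  if_neg hy

theorem mem_fracIdeal_of_le_addValuationOfNeZero {y : R} {h : ℤ}
    (hy : (h : WithTop ℤ) ≤ addValuationOfNeZero vL hmul hadd y) : y ∈ fracIdeal R vL h :=
  fun hy0 => by rwa [addValuationOfNeZero_apply _ _ _ hy0, WithTop.coe_le_coe] at hy

end IntValuation

section TruncAlg

variable {K : Type} [Field K] {p n : ℕ}

theorem tgen_pow_eq_zero {m : ℕ} (hm : p ^ n ≤ m) : tgen K p n ^ m = 0 := by
  have h : tgen K p n ^ p ^ n = 0 := by
    rw [tgen, AdjoinRoot.root, ← map_pow, AdjoinRoot.mk_self]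
  rw [← Nat.sub_add_cancel hm, pow_add, h, mul_zero]

theorem tbasis_apply (k : Fin (p ^ n)) : tbasis K p n k = tgen K p n ^ (k : ℕ) := by
  rw [tbasis, Module.Basis.reindex_apply, PowerBasis.basis_eq_pow, AdjoinRoot.powerBasis_gen]
  rfl

theorem zdual_eq_coord (k : Fin (p ^ n)) : zdual K p n k = (tbasis K p n).coord k := by
  rw [zdual, dif_pos k.isLt]

theorem zdual_of_le {j : ℕ} (hj : p ^ n ≤ j) : zdual K p n j = 0 := by
  rw [zdual, dif_neg (not_lt.mpr hj)]

theorem zdual_tgen_pow {j : ℕ} (hj : j < p ^ n) (m : ℕ) :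
    zdual K p n j (tgen K p n ^ m) = if j = m then 1 else 0 := by
  rcases lt_or_ge m (p ^ n) with hm | hm
  · rw [← tbasis_apply ⟨m, hm⟩, zdual_eq_coord ⟨j, hj⟩, Module.Basis.coord_apply,
      Module.Basis.repr_self, Finsupp.single_apply]
    simp [Fin.ext_iff, eq_comm]
  · rw [tgen_pow_eq_zero hm, map_zero, if_neg (by omega)]

theorem zdual_tgen_pow_mul {j : ℕ} (hj : j < p ^ n) (e : ℕ) (h : TruncAlg K p n) :
    zdual K p n j (tgen K p n ^ e * h) = if e ≤ j then zdual K p n (j - e) h else 0 := by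
  have key : zdual K p n j ∘ₗ LinearMap.mulLeft K (tgen K p n ^ e)
      = if e ≤ j then zdual K p n (j - e) else 0 := by
    refine (tbasis K p n).ext fun k => ?_
    rw [LinearMap.comp_apply, LinearMap.mulLeft_apply, tbasis_apply, ← pow_add,
      zdual_tgen_pow hj]
    by_cases he : e ≤ j
    · rw [if_pos he, zdual_tgen_pow (by omega)]
      exact if_congr (by omega) rfl rfl
    · rw [if_neg he, if_neg (by omega), LinearMap.zero_apply]
  rw [← LinearMap.mulLeft_apply (R := K), ← LinearMap.comp_apply, key]
  split_ifs <;> rfl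

end TruncAlg

section Coefficients

variable (K : Type) [Field K] (p n : ℕ) (L : Type) [CommRing L] [Algebra K L]

def tCoeff (j : ℕ) : L ⊗[K] TruncAlg K p n →ₗ[K] L :=
  (TensorProduct.rid K L).toLinearMap ∘ₗ TensorProduct.map LinearMap.id (zdual K p n j)

variable {K p n L}

@[simp]
theorem tCoeff_tmul (j : ℕ) (y : L) (h : TruncAlg K p n) :
    tCoeff K p n L j (y ⊗ₜ h) = zdual K p n j h • y := by
  simp [tCoeff]

theorem tCoeff_of_le {j : ℕ} (hj : p ^ n ≤ j) (z : L ⊗[K] TruncAlg K p n) :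
    tCoeff K p n L j z = 0 := by
  simp [tCoeff, zdual_of_le hj]

theorem sum_tCoeff_tmul (z : L ⊗[K] TruncAlg K p n) :
    ∑ k : Fin (p ^ n), tCoeff K p n L k z ⊗ₜ (tgen K p n ^ (k : ℕ)) = z := by
  induction z using TensorProduct.induction_on with
  | zero => simp
  | add z₁ z₂ h₁ h₂ => simp only [map_add, add_tmul, Finset.sum_add_distrib, h₁, h₂]
  | tmul y h =>
    simp_rw [tCoeff_tmul, smul_tmul, ← tmul_sum, zdual_eq_coord, Module.Basis.coord_apply,
      ← tbasis_apply, (tbasis K p n).sum_repr]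

theorem tCoeff_tmul_tgen_pow_mul {j : ℕ} (hj : j < p ^ n) (y : L) (e : ℕ)
    (z : L ⊗[K] TruncAlg K p n) :
    tCoeff K p n L j ((y ⊗ₜ (tgen K p n ^ e)) * z)
      = if e ≤ j then y * tCoeff K p n L (j - e) z else 0 := by
  induction z using TensorProduct.induction_on with
  | zero => simp
  | add z₁ z₂ h₁ h₂ =>
    rw [mul_add, map_add, h₁, h₂, map_add]
    split_ifs <;> simp [mul_add]
  | tmul y' h =>
    rw [Algebra.TensorProduct.tmul_mul_tmul, tCoeff_tmul, tCoeff_tmul, zdual_tgen_pow_mul hj]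
    split_ifs <;> simp

theorem tCoeff_tmul_tgen_pow {j : ℕ} (y : L) (e : ℕ) :
    tCoeff K p n L j (y ⊗ₜ (tgen K p n ^ e)) = if j = e ∧ j < p ^ n then y else 0 := by
  rcases lt_or_ge j (p ^ n) with hj | hj
  · rw [tCoeff_tmul, zdual_tgen_pow hj]
    split_ifs <;> simp_all
  · rw [tCoeff_of_le hj, if_neg (by omega)]

theorem tCoeff_add_pow {j : ℕ} (hj : j < p ^ n) (y : L) (i : ℕ) :
    tCoeff K p n L j ((y ⊗ₜ 1 + 1 ⊗ₜ tgen K p n) ^ i)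
      = if j ≤ i then i.choose j • y ^ (i - j) else 0 := by
  rw [add_pow, map_sum]
  simp_rw [Algebra.TensorProduct.tmul_pow, Algebra.TensorProduct.tmul_mul_tmul, one_pow, mul_one,
    one_mul, ← Nat.cast_comm, ← nsmul_eq_mul, map_nsmul, tCoeff_tmul_tgen_pow, hj, and_true]
  split_ifs with hji
  · rw [Finset.sum_eq_single (i - j)]
    · rw [if_pos (by omega), Nat.choose_symm hji]
    · intro k hk hne
      rw [Finset.mem_range] at hk
      rw [if_neg (by omega), smul_zero]
    · simp
  · refine Finset.sum_eq_zero fun k hk => ?_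
    rw [Finset.mem_range] at hk
    rw [if_neg (by omega), smul_zero]

end Coefficients

section Filtration

variable {K : Type} [Field K] {p n : ℕ} {L : Type} [CommRing L] [Algebra K L]

variable (K p n) in
def tFiltration (v : AddValuation L (WithTop ℤ)) (b c : ℤ) :
    AddSubgroup (L ⊗[K] TruncAlg K p n) where
  carrier := {z | ∀ j : ℕ, ((c + b * j : ℤ) : WithTop ℤ) ≤ v (tCoeff K p n L j z)}
  add_mem' {z₁ z₂} h₁ h₂ j := by
    rw [map_add]
    exact (le_min (h₁ j) (h₂ j)).trans (v.map_add _ _)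
  zero_mem' j := by simp
  neg_mem' {z} h j := by
    rw [map_neg, v.map_neg]
    exact h j

variable {v : AddValuation L (WithTop ℤ)} {b : ℤ}

theorem tFiltration_antitone {c c' : ℤ} (h : c' ≤ c) :
    tFiltration K p n v b c ≤ tFiltration K p n v b c' :=
  fun _ hz j => le_trans (WithTop.coe_le_coe.mpr (by linarith)) (hz j)

theorem tmul_tgen_pow_mem_tFiltration {y : L} {e : ℕ} {c : ℤ}
    (hy : ((c + b * e : ℤ) : WithTop ℤ) ≤ v y) :
    y ⊗ₜ (tgen K p n ^ e) ∈ tFiltration K p n v b c := by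
  intro j
  rw [tCoeff_tmul_tgen_pow]
  split_ifs with h
  · rwa [h.1]
  · simp

theorem tmul_tgen_pow_mul_mem_tFiltration {y : L} {e : ℕ} {c c' : ℤ}
    (hy : ((c + b * e : ℤ) : WithTop ℤ) ≤ v y) {z : L ⊗[K] TruncAlg K p n}
    (hz : z ∈ tFiltration K p n v b c') :
    (y ⊗ₜ (tgen K p n ^ e)) * z ∈ tFiltration K p n v b (c + c') := by
  intro j
  rcases lt_or_ge j (p ^ n) with hj | hj
  · rw [tCoeff_tmul_tgen_pow_mul hj]
    split_ifs with he
    · have hsum : ((c + c' + b * j : ℤ) : WithTop ℤ)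
          = ((c + b * e : ℤ) : WithTop ℤ) + ((c' + b * (j - e : ℕ) : ℤ) : WithTop ℤ) := by
        rw [← WithTop.coe_add, Nat.cast_sub he, WithTop.coe_inj]
        ring
      rw [hsum, v.map_mul]
      exact add_le_add hy (hz _)
    · simp
  · simp [tCoeff_of_le hj]

theorem mul_mem_tFiltration {z₁ z₂ : L ⊗[K] TruncAlg K p n} {c₁ c₂ : ℤ}
    (h₁ : z₁ ∈ tFiltration K p n v b c₁) (h₂ : z₂ ∈ tFiltration K p n v b c₂) :
    z₁ * z₂ ∈ tFiltration K p n v b (c₁ + c₂) := by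
  rw [← sum_tCoeff_tmul z₁, Finset.sum_mul]
  exact AddSubgroup.sum_mem _ fun k _ => tmul_tgen_pow_mul_mem_tFiltration (h₁ k) h₂

theorem one_mem_tFiltration : (1 : L ⊗[K] TruncAlg K p n) ∈ tFiltration K p n v b 0 := by
  rw [Algebra.TensorProduct.one_def, ← pow_zero (tgen K p n)]
  exact tmul_tgen_pow_mem_tFiltration (by simp)

theorem pow_mem_tFiltration {z : L ⊗[K] TruncAlg K p n} {c : ℤ}
    (hz : z ∈ tFiltration K p n v b c) (m : ℕ) :
    z ^ m ∈ tFiltration K p n v b (m * c) := by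
  induction m with
  | zero => simpa using one_mem_tFiltration
  | succ m ih =>
    rw [pow_succ, Nat.cast_succ, add_one_mul]
    exact mul_mem_tFiltration ih hz

theorem smul_mem_tFiltration {k : K} {c c' : ℤ} (hk : (c' : WithTop ℤ) ≤ v (algebraMap K L k))
    {z : L ⊗[K] TruncAlg K p n} (hz : z ∈ tFiltration K p n v b c) :
    k • z ∈ tFiltration K p n v b (c' + c) := by
  intro j
  rw [map_smul, Algebra.smul_def, v.map_mul, add_assoc, WithTop.coe_add]
  exact add_le_add hk (hz j)

theorem pow_sub_pow_mem_tFiltration {a a' : L ⊗[K] TruncAlg K p n} {c d : ℤ}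
    (ha : a ∈ tFiltration K p n v b c) (ha' : a' ∈ tFiltration K p n v b c)
    (hd : a - a' ∈ tFiltration K p n v b (c + d)) (m : ℕ) :
    a ^ m - a' ^ m ∈ tFiltration K p n v b (m * c + d) := by
  induction m with
  | zero => simp
  | succ m ih =>
    have h : a ^ (m + 1) - a' ^ (m + 1) = a * (a ^ m - a' ^ m) + (a - a') * a' ^ m := by ring
    rw [h]
    refine AddSubgroup.add_mem _ ?_ ?_
    · convert mul_mem_tFiltration ha ih using 2
      push_cast; ring
    · convert mul_mem_tFiltration hd (pow_mem_tFiltration ha' m) using 2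
      push_cast; ring

theorem tmul_add_tmul_mem_tFiltration {x : L} (hx : v x = ↑(-b)) :
    x ⊗ₜ 1 + 1 ⊗ₜ tgen K p n ∈ tFiltration K p n v b (-b) := by
  refine AddSubgroup.add_mem _ ?_ ?_
  · rw [← pow_zero (tgen K p n)]
    exact tmul_tgen_pow_mem_tFiltration (by simp [hx])
  · rw [← pow_one (tgen K p n)]
    exact tmul_tgen_pow_mem_tFiltration (by simp)

end Filtration

open Nat in
theorem choose_pow_modEq_digit (p : ℕ) [Fact p.Prime] (s i : ℕ) :
    i.choose (p ^ s) ≡ digit p i s [MOD p] := by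
  induction s generalizing i with
  | zero => simpa [digit] using (Nat.mod_modEq i p).symm
  | succ s ih =>
    have h := Choose.choose_modEq_choose_mod_mul_choose_div_nat
      (p := p) (n := i) (k := p ^ (s + 1))
    rw [pow_succ, Nat.mul_mod_left, Nat.mul_div_cancel _ (Fact.out : p.Prime).pos,
      Nat.choose_zero_right, one_mul] at h
    refine h.trans ((ih (i / p)).trans ?_)
    rw [digit, digit, Nat.div_div_eq_div_mul, ← pow_succ']

section Coaction

variable {K : Type} [Field K] {p n : ℕ} {L : Type} [Field L] [Algebra K L]
  {v : AddValuation L (WithTop ℤ)} {b : ℤ} {x : L}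

theorem alphaEl_sub_mem_tFiltration (r : ℕ) {f : K} {c : ℤ} (hx : v x = ↑(-b))
    (hpf : ∀ ℓ ∈ Finset.Icc 1 (p - 1),
      (0 : WithTop ℤ) ≤ v (algebraMap K L (pfCoeff K p ℓ)))
    (hf : (c : WithTop ℤ) ≤ v (algebraMap K L f)) :
    alphaEl K p n r f L x - (x ⊗ₜ 1 + 1 ⊗ₜ tgen K p n)
      ∈ tFiltration K p n v b (c - b * p ^ (r + 1)) := by
  rw [alphaEl, add_sub_cancel_left, sub_eq_add_neg]
  refine smul_mem_tFiltration hf (AddSubgroup.sum_mem _ fun ℓ hℓ => ?_)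
  rw [← zero_add (-(b * p ^ (r + 1)))]
  refine smul_mem_tFiltration (hpf ℓ hℓ) (tmul_tgen_pow_mem_tFiltration ?_)
  have hℓp : ℓ ≤ p := by rw [Finset.mem_Icc] at hℓ; omega
  rw [v.map_pow, hx, ← WithTop.coe_nsmul, WithTop.coe_le_coe, nsmul_eq_mul]
  push_cast [hℓp, pow_succ]
  linarith

theorem alphaEl_pow_sub_pow_mem_tFiltration (r : ℕ) {f : K} {c : ℤ} (hx : v x = ↑(-b))
    (hpf : ∀ ℓ ∈ Finset.Icc 1 (p - 1),
      (0 : WithTop ℤ) ≤ v (algebraMap K L (pfCoeff K p ℓ)))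
    (hf : (c : WithTop ℤ) ≤ v (algebraMap K L f)) (hc : b * (p ^ (r + 1) - 1) ≤ c) (i : ℕ) :
    alphaEl K p n r f L x ^ i - (x ⊗ₜ 1 + 1 ⊗ₜ tgen K p n) ^ i
      ∈ tFiltration K p n v b (i * -b + (c - b * (p ^ (r + 1) - 1))) := by
  have hP := tmul_add_tmul_mem_tFiltration (K := K) (p := p) (n := n) hx
  have hC : alphaEl K p n r f L x - (x ⊗ₜ 1 + 1 ⊗ₜ tgen K p n)
      ∈ tFiltration K p n v b (-b + (c - b * (p ^ (r + 1) - 1))) := by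
    convert alphaEl_sub_mem_tFiltration r hx hpf hf using 2
    ring
  have hA : alphaEl K p n r f L x ∈ tFiltration K p n v b (-b) := by
    simpa using AddSubgroup.add_mem _ hP (tFiltration_antitone (by linarith) hC)
  exact pow_sub_pow_mem_tFiltration hA hP hC i

theorem tCoeff_tmul_add_tmul_pow [Fact p.Prime] [CharP K p] {s : ℕ} (hs : p ^ s < p ^ n)
    (i : ℕ) :
    tCoeff K p n L (p ^ s) ((x ⊗ₜ 1 + 1 ⊗ₜ tgen K p n) ^ i)
      = (digit p i s : K) • x ^ ((i : ℤ) - p ^ s) := by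
  rw [tCoeff_add_pow hs]
  split_ifs with h
  · rw [← Nat.cast_smul_eq_nsmul K,
      (CharP.natCast_eq_natCast K p).mpr (choose_pow_modEq_digit p s i), ← Nat.cast_pow,
      ← Nat.cast_sub h, zpow_natCast]
  · rw [digit, Nat.div_eq_of_lt (by omega), Nat.zero_mod, Nat.cast_zero, zero_smul]

theorem hact_zdual_pow (r : ℕ) (f : K) {bL : Module.Basis (Fin (p ^ n)) K L}
    (hbL : ∀ i : Fin (p ^ n), bL i = x ^ (i : ℕ)) {i : ℕ} (hi : i < p ^ n) (j : ℕ) :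
    hact K p n r f L x bL (zdual K p n j) (x ^ i)
      = tCoeff K p n L j (alphaEl K p n r f L x ^ i) := by
  rw [← hbL ⟨i, hi⟩]
  simp only [hact, alphaMap, LinearMap.comp_apply, Module.Basis.constr_basis]
  rfl

end Coaction

theorem order_pfCoeff (F : Type) [Field F] (p ℓ : ℕ) :
    (pfCoeff (LaurentSeries F) p ℓ).order = 0 := by
  have h : pfCoeff (LaurentSeries F) p ℓ = HahnSeries.C (pfCoeff F p ℓ) := by
    rw [pfCoeff, pfCoeff, map_inv₀, map_natCast]
  rw [h, HahnSeries.order_C]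

theorem zdual_act_congruence_general
    (p : ℕ) [Fact p.Prime] (F : Type) [Field F] [CharP F p]
    (n r : ℕ)
    (f : LaurentSeries F)
    (L : Type) [Field L] [Algebra (LaurentSeries F) L]
    (β : LaurentSeries F) (b : ℤ) (hb : 0 < b)
    (hβ : β ≠ 0) (hordβ : β.order = -b)
    (x : L) (hx : x ^ p ^ n = algebraMap (LaurentSeries F) L β)
    (bL : Module.Basis (Fin (p ^ n)) (LaurentSeries F) L)
    (hbL : ∀ i : Fin (p ^ n), bL i = x ^ (i : ℕ))
    (vL : L → ℤ)
    (hvmul : ∀ y z : L, y ≠ 0 → z ≠ 0 → vL (y * z) = vL y + vL z)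
    (hvadd : ∀ y z : L, y ≠ 0 → z ≠ 0 → y + z ≠ 0 → min (vL y) (vL z) ≤ vL (y + z))
    (hvK : ∀ c : LaurentSeries F, c ≠ 0 →
      vL (algebraMap (LaurentSeries F) L c) = (p : ℤ) ^ n * c.order)
    (hvf : (b : ℤ) * (p : ℤ) ^ (r + 1) ≤ (p : ℤ) ^ n * f.order) :
    ∀ s : ℕ, s < n → ∀ i : ℕ, 1 ≤ i → i ≤ p ^ n - 1 →
      ∃ w ∈ fracIdeal L vL ((p : ℤ) ^ n * f.order - b * ((p : ℤ) ^ (r + 1) - 1)),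
        hact (LaurentSeries F) p n r f L x bL (zdual (LaurentSeries F) p n (p ^ s)) (x ^ i)
            - (digit p i s : LaurentSeries F) • (x ^ ((i : ℤ) - (p : ℤ) ^ s))
          = x ^ ((i : ℤ) - (p : ℤ) ^ s) * w := by
  intro s hs i _ hi
  have hp : p.Prime := Fact.out
  have : CharP (LaurentSeries F) p :=
    charP_of_injective_algebraMap (algebraMap F (LaurentSeries F)).injective p
  set v := addValuationOfNeZero vL hvmul hvadd
  have hvK_le (c : LaurentSeries F) :
      (((p : ℤ) ^ n * c.order : ℤ) : WithTop ℤ) ≤ v (algebraMap _ L c) := by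
    rcases eq_or_ne c 0 with rfl | hc
    · simp
    · rw [addValuationOfNeZero_apply _ _ _ ((_root_.map_ne_zero _).mpr hc), hvK c hc]
  have hvx : v x = ↑(-b) := by
    refine v.eq_coe_of_map_pow (pow_ne_zero n hp.ne_zero) ?_
    rw [hx, addValuationOfNeZero_apply _ _ _ ((_root_.map_ne_zero _).mpr hβ), hvK β hβ, hordβ]
    push_cast; rfl
  have hx0 : x ≠ 0 := fun h => by
    rw [h, v.map_zero] at hvx
    exact WithTop.top_ne_coe hvx
  have hE := alphaEl_pow_sub_pow_mem_tFiltration (n := n) r hvx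
    (fun ℓ _ => by simpa [order_pfCoeff] using hvK_le (pfCoeff _ p ℓ)) (hvK_le f)
    (by nlinarith) i
  set m : ℤ := i - p ^ s
  set e := tCoeff _ p n L (p ^ s)
    (alphaEl _ p n r f L x ^ i - (x ⊗ₜ[LaurentSeries F] 1 + 1 ⊗ₜ tgen _ p n) ^ i)
  refine ⟨x ^ (-m) * e, mem_fracIdeal_of_le_addValuationOfNeZero vL hvmul hvadd ?_, ?_⟩
  · rw [v.map_mul, v.map_zpow_of_eq_coe hvx]
    calc _ = ((-m * -b : ℤ) : WithTop ℤ)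
          + ((i * -b + ((p : ℤ) ^ n * f.order - b * (p ^ (r + 1) - 1)) + b * (p ^ s : ℕ) : ℤ)
            : WithTop ℤ) := by
          rw [← WithTop.coe_add, WithTop.coe_inj]; push_cast; ring
      _ ≤ _ := add_le_add le_rfl (hE (p ^ s))
  · rw [hact_zdual_pow r f hbL (by omega),
      ← tCoeff_tmul_add_tmul_pow (Nat.pow_lt_pow_right hp.one_lt hs), ← map_sub, ← mul_assoc,
      ← zpow_add₀ hx0, add_neg_cancel, zpow_zero, one_mul]

/-- If `p^n·v_K(f) ≥ b·p^{r+1}` and `𝔗 = p^n·v_K(f) - b(p^{r+1}-1)`, then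
for `0 ≤ s ≤ n-1` and `1 ≤ i ≤ p^n-1`,
`z_{p^s}(x^i) ≡ i_s·x^{i-p^s}` modulo `x^{i-p^s}·𝔓_L^𝔗`. -/
theorem zdual_act_congruence
    (p : ℕ) [Fact p.Prime] (F : Type) [Field F] [Fintype F] [CharP F p]
    (n r : ℕ) (hr : 0 < r) (hrn : r < n) (hn2r : n ≤ 2 * r)
    (f : LaurentSeries F) (hf : f ≠ 0)
    (L : Type) [Field L] [Algebra (LaurentSeries F) L]
    (β : LaurentSeries F) (b : ℤ) (hb : 0 < b) (hpb : ¬ (p : ℤ) ∣ b)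
    (hβ : β ≠ 0) (hordβ : β.order = -b)
    (x : L) (hx : x ^ p ^ n = algebraMap (LaurentSeries F) L β)
    (bL : Module.Basis (Fin (p ^ n)) (LaurentSeries F) L)
    (hbL : ∀ i : Fin (p ^ n), bL i = x ^ (i : ℕ))
    (vL : L → ℤ)
    (hvmul : ∀ y z : L, y ≠ 0 → z ≠ 0 → vL (y * z) = vL y + vL z)
    (hvadd : ∀ y z : L, y ≠ 0 → z ≠ 0 → y + z ≠ 0 → min (vL y) (vL z) ≤ vL (y + z))
    (hvK : ∀ c : LaurentSeries F, c ≠ 0 →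
      vL (algebraMap (LaurentSeries F) L c) = (p : ℤ) ^ n * c.order)
    (hvf : (b : ℤ) * (p : ℤ) ^ (r + 1) ≤ (p : ℤ) ^ n * f.order) :
    ∀ s : ℕ, s < n → ∀ i : ℕ, 1 ≤ i → i ≤ p ^ n - 1 →
      ∃ w ∈ fracIdeal L vL ((p : ℤ) ^ n * f.order - b * ((p : ℤ) ^ (r + 1) - 1)),
        hact (LaurentSeries F) p n r f L x bL (zdual (LaurentSeries F) p n (p ^ s)) (x ^ i)
            - (digit p i s : LaurentSeries F) • (x ^ ((i : ℤ) - (p : ℤ) ^ s))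
          = x ^ ((i : ℤ) - (p : ℤ) ^ s) * w :=
  zdual_act_congruence_general p F n r f L β b hb hβ hordβ x hx bL hbL vL hvmul hvadd hvK hvf

end
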